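/- arXiv:1902.07680 — 7 statements merged into one kernel-verified Lean document; each statement's English description precedes it below -/
import Mathlib

section
/- Let A ⊆ Sym2 S be an i-connected set of unordered pairs of distinct points of the circle S, let a, b be points of the closure of T(A), and let g be the unordered pair {a, b}. If an unordered pair h of points of S links g, then h links some element of A. -/
/- STATEMENT 0: Let A ⊆ Sym2 S be an i-connected set of unordered pairs of distinct
points of the circle S, let a, b be points of the closure of T(A), and let g be the
unordered pair {a, b}. If an unordered pair h of points of S links g, then h links
some element of A. -/

theorem Real.fact_zero_lt_one : Fact ((0 : ℝ) < 1) :=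
  ⟨zero_lt_one⟩

attribute [local instance] Real.fact_zero_lt_one

noncomputable section

/-- The circle ℝ/ℤ. -/
abbrev Circle' : Type := AddCircle (1 : ℝ)

/-- The ordered pairs `(a,b)` and `(c,d)` link. -/
def LinkPair (a b c d : Circle') : Prop :=
  (sbtw a c b ∧ sbtw b d a) ∨ (sbtw a d b ∧ sbtw b c a)

/-- Two unordered pairs of points of the circle link. -/
def Links (g h : Sym2 Circle') : Prop :=
  ∃ a b c d : Circle', g = s(a, b) ∧ h = s(c, d) ∧ LinkPair a b c d

/-- `T A`: the set of all points of the circle occurring in pairs of `A`. -/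
def pts (A : Set (Sym2 Circle')) : Set Circle' := {x | ∃ s ∈ A, x ∈ s}

/-- The linking graph of `A`: vertices are the elements of `A`, and two distinct
vertices are adjacent iff they link. -/
def linkGraph (A : Set (Sym2 Circle')) : SimpleGraph A :=
  SimpleGraph.fromRel fun g h => Links g.1 h.1

/-- `A` is i-connected if its linking graph is connected. -/
def IConnected (A : Set (Sym2 Circle')) : Prop := (linkGraph A).Connected


/-!
Suppose `{c, d}` links no pair of `A`, while `a ∈ (c, d)` and `b ∈ (d, c)`. Arcs are open, so some
pair of `A` has an endpoint in `(c, d)` and some pair has one in `(d, c)`. A pair of `A` with an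
endpoint in `(c, d)` does not link `{c, d}`, so its other endpoint lies in `[c, d]`; one of the two
arcs it cuts off is then contained in `(c, d)`, so every pair linking it also meets `(c, d)`. By
i-connectedness this propagates to a pair with an endpoint in `(d, c)`, which then links `{c, d}`.
-/

open Set

section CircularOrder

variable {α : Type*} [CircularOrder α] {a b c d x w : α}

lemma sbtw_of_btw_of_ne (h : btw a b c) (hab : a ≠ b) (hbc : b ≠ c) (hca : c ≠ a) :
    sbtw a b c :=
  sbtw_of_btw_not_btw h fun h' => by
    rcases h.antisymm h' with h | h | h <;> contradiction

lemma sbtw_of_btw_of_sbtw_left (hac : a ≠ c) (habc : btw a b c) (hbxc : sbtw b x c) :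
    sbtw a x c := by
  rcases eq_or_ne a b with rfl | hab
  · exact hbxc
  · exact (sbtw_of_btw_of_ne habc hab (sbtw_irrefl_left_right <| · ▸ hbxc) hac.symm).trans_left
      hbxc

lemma sbtw_of_btw_of_sbtw_right (hac : a ≠ c) (habc : btw a b c) (haxb : sbtw a x b) :
    sbtw a x c := by
  rcases eq_or_ne b c with rfl | hbc
  · exact haxb
  · exact sbtw_trans_right haxb
      (sbtw_of_btw_of_ne habc (sbtw_irrefl_left_right <| · ▸ haxb) hbc hac.symm)

lemma Set.cIoo_subset_cIoo_or_cIoo_subset_cIoo (hx : x ∈ cIoo c d) (hw : w ∈ cIcc c d) :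
    cIoo x w ⊆ cIoo c d ∨ cIoo w x ⊆ cIoo c d := by
  rw [mem_cIoo] at hx
  rw [mem_cIcc] at hw
  by_cases hcwx : btw c w x
  · refine .inr fun z hz => ?_
    exact sbtw_trans_right (sbtw_of_btw_of_sbtw_left (sbtw_irrefl_left <| · ▸ hx) hcwx hz) hx
  · have hxwc : sbtw x w c := sbtw_iff_not_btw.2 hcwx
    have hxwd : btw x w d := by
      by_contra hxwd
      have hwcd : sbtw w c d :=
        sbtw_trans_right hxwc.cyclic_left (sbtw_iff_not_btw.2 hxwd).cyclic_left
      exact not_sbtw_of_btw hw hwcd.cyclic_right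
    exact .inl fun y hy =>
      hx.trans_left (sbtw_of_btw_of_sbtw_right (sbtw_irrefl_right <| · ▸ hx) hxwd hy)

lemma sbtw_rotate_of_sbtw (h₁ : sbtw a c b) (h₂ : sbtw b d a) : sbtw c b d ∧ sbtw d a c :=
  ⟨(sbtw_trans_right h₂ h₁.cyclic_left.cyclic_left).cyclic_right,
    (sbtw_trans_right h₁ h₂.cyclic_right).cyclic_right⟩

end CircularOrder

lemma AddCircle.isOpen_cIoo {𝕜 : Type*} [Field 𝕜] [LinearOrder 𝕜] [IsStrictOrderedRing 𝕜]
    [Archimedean 𝕜] [TopologicalSpace 𝕜] [OrderTopology 𝕜] {p : 𝕜} [hp : Fact (0 < p)]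
    (c d : AddCircle p) : IsOpen (cIoo c d) := by
  obtain ⟨γ, rfl⟩ := QuotientAddGroup.mk_surjective c
  obtain ⟨δ, rfl⟩ := QuotientAddGroup.mk_surjective d
  have hsbtw (t : 𝕜) :
      sbtw (γ : AddCircle p) t δ ↔ toIocMod hp.out δ γ < toIcoMod hp.out δ t := by
    rw [sbtw_iff_not_btw, QuotientAddGroup.btw_coe_iff, not_le]
  rw [← (QuotientAddGroup.isQuotientMap_mk _).isOpen_preimage, isOpen_iff_mem_nhds]
  intro t ht
  have ht' := (hsbtw t).1 ht
  have hδt : ¬t ≡ δ [PMOD p] := fun h => by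
    rw [(AddCommGroup.modEq_iff_toIcoMod_eq_left hp.out).1 h.symm] at ht'
    exact ht'.not_gt (left_lt_toIocMod _ _ _)
  filter_upwards [(continuousAt_toIcoMod hp.out δ hδt).preimage_mem_nhds (Ioi_mem_nhds ht')]
    with s hs using (hsbtw s).2 hs

section Links

variable {a b c d x w y z : Circle'}

lemma linkPair_comm_left : LinkPair a b c d ↔ LinkPair b a c d := by
  unfold LinkPair; tauto

lemma linkPair_comm_right : LinkPair a b c d ↔ LinkPair a b d c := by
  unfold LinkPair; tauto

lemma LinkPair.symm (h : LinkPair a b c d) : LinkPair c d a b := by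
  rcases h with ⟨h₁, h₂⟩ | ⟨h₁, h₂⟩
  · exact .inr (sbtw_rotate_of_sbtw h₁ h₂)
  · exact .inl (sbtw_rotate_of_sbtw h₂ h₁)

lemma links_mk_iff : Links s(a, b) s(c, d) ↔ LinkPair a b c d := by
  refine ⟨fun ⟨a', b', c', d', hab, hcd, h⟩ => ?_, fun h => ⟨a, b, c, d, rfl, rfl, h⟩⟩
  rcases Sym2.eq_iff.1 hab with ⟨rfl, rfl⟩ | ⟨rfl, rfl⟩ <;>
    rcases Sym2.eq_iff.1 hcd with ⟨rfl, rfl⟩ | ⟨rfl, rfl⟩ <;>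
    simp_all only [linkPair_comm_left (a := a), linkPair_comm_right (c := c)]

lemma Links.symm {g h : Sym2 Circle'} (hgh : Links g h) : Links h g :=
  let ⟨a, b, c, d, hg, hh, h⟩ := hgh
  ⟨c, d, a, b, hh, hg, h.symm⟩

lemma links_of_linkGraph_adj {A : Set (Sym2 Circle')} {e f : A}
    (hef : (linkGraph A).Adj e f) : Links e f :=
  hef.2.elim id Links.symm

lemma LinkPair.mem_cIoo_or_mem_cIoo (h : LinkPair x w y z) (hx : x ∈ cIoo c d)
    (hw : w ∈ cIcc c d) : y ∈ cIoo c d ∨ z ∈ cIoo c d := by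
  rcases cIoo_subset_cIoo_or_cIoo_subset_cIoo hx hw with hs | hs <;>
    rcases h with ⟨hy, hz⟩ | ⟨hz, hy⟩
  exacts [.inl (hs hy), .inr (hs hz), .inr (hs hz), .inl (hs hy)]

end Links

lemma SimpleGraph.Reachable.of_adj_imp {V : Type*} {G : SimpleGraph V} {P : V → Prop}
    (hP : ∀ u v, G.Adj u v → P u → P v) {u v : V} (huv : G.Reachable u v) : P u → P v := by
  obtain ⟨walk⟩ := huv
  induction walk with
  | nil => exact id
  | cons hadj _ ih => exact ih ∘ hP _ _ hadj

theorem exists_links_of_sbtw_of_sbtw {A : Set (Sym2 Circle')} (hconn : IConnected A)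
    {a b c d : Circle'} (ha : a ∈ closure (pts A)) (hb : b ∈ closure (pts A))
    (hcad : sbtw c a d) (hdbc : sbtw d b c) : ∃ g ∈ A, Links s(c, d) g := by
  by_contra! hnone
  have hcIcc : ∀ {x w}, s(x, w) ∈ A → x ∈ cIoo c d → w ∈ cIcc c d :=
    fun he hx => by
      rw [← compl_cIoo]
      exact fun hw => hnone _ he (links_mk_iff.2 (.inl ⟨hx, hw⟩))
  let Meets (e : A) : Prop := ∃ x ∈ (e : Sym2 Circle'), x ∈ cIoo c d
  have hstep : ∀ e f : A, (linkGraph A).Adj e f → Meets e → Meets f := by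
    rintro ⟨e, he⟩ ⟨f, _⟩ hadj ⟨x, hxe, hx⟩
    obtain ⟨w, rfl⟩ := Sym2.mem_iff_exists.1 hxe
    induction f using Sym2.ind with | h y z => ?_
    rcases (links_mk_iff.1 (links_of_linkGraph_adj hadj)).mem_cIoo_or_mem_cIoo hx
      (hcIcc he hx) with hy | hz
    exacts [⟨y, Sym2.mem_mk_left y z, hy⟩, ⟨z, Sym2.mem_mk_right y z, hz⟩]
  obtain ⟨p, hp, e₁, he₁, hpe₁⟩ := mem_closure_iff.1 ha _ (AddCircle.isOpen_cIoo c d) hcad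
  obtain ⟨q, hq, e₂, he₂, hqe₂⟩ := mem_closure_iff.1 hb _ (AddCircle.isOpen_cIoo d c) hdbc
  obtain ⟨x, hxe₂, hx⟩ : Meets ⟨e₂, he₂⟩ :=
    (hconn.preconnected ⟨e₁, he₁⟩ ⟨e₂, he₂⟩).of_adj_imp hstep ⟨p, hpe₁, hp⟩
  have hxq : x ≠ q := fun hxq => sbtw_asymm hx (mem_cIoo.1 (hxq ▸ hq))
  have he₂xq : e₂ = s(x, q) := (Sym2.mem_and_mem_iff hxq).1 ⟨hxe₂, hqe₂⟩
  exact hnone e₂ he₂ (he₂xq ▸ links_mk_iff.2 (.inl ⟨hx, hq⟩))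

theorem links_pair_in_closed_hull_implies_links_element_general
    (A : Set (Sym2 Circle')) (hconn : IConnected A)
    (a b : Circle') (ha : a ∈ closure (pts A)) (hb : b ∈ closure (pts A))
    (h : Sym2 Circle') (hlink : Links h s(a, b)) :
    ∃ g ∈ A, Links h g := by
  induction h using Sym2.ind with | h c d => ?_
  rcases links_mk_iff.1 hlink with ⟨hcad, hdbc⟩ | ⟨hcbd, hdac⟩
  exacts [exists_links_of_sbtw_of_sbtw hconn ha hb hcad hdbc,
    exists_links_of_sbtw_of_sbtw hconn hb ha hcbd hdac]

theorem links_pair_in_closed_hull_implies_links_element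
    (A : Set (Sym2 Circle')) (hA : ∀ s ∈ A, ¬ s.IsDiag) (hconn : IConnected A)
    (a b : Circle') (ha : a ∈ closure (pts A)) (hb : b ∈ closure (pts A))
    (h : Sym2 Circle') (hlink : Links h s(a, b)) :
    ∃ g ∈ A, Links h g :=
  links_pair_in_closed_hull_implies_links_element_general A hconn a b ha hb h hlink
end
end

section
/- Let μ be a measure on Sym2 (OnePoint ℝ) such that for all x, y ∈ ℍ the crossing set G⋔([x,y)) is μ-measurable and has finite μ-measure. Define d_μ : ℍ → ℍ → ℝ by d_μ(x,y) := (1/2)·((μ(G⋔([x,y)))).toReal + (μ(G⋔((x,y]))).toReal). Then d_μ is a straight pseudo-distance on ℍ: d_μ(x,y) ≥ 0, d_μ(x,x) = 0, d_μ(x,y) = d_μ(y,x), d_μ(x,z) ≤ d_μ(x,y) + d_μ(y,z) for all x, y, z ∈ ℍ, and whenever dist x y + dist y z = dist x z one has d_μ(x,z) = d_μ(x,y) + d_μ(y,z). -/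
/- STATEMENT 3: Let μ be a measure on Sym2 (OnePoint ℝ) such that for all x, y ∈ ℍ the
crossing set G⋔([x,y)) is μ-measurable and has finite μ-measure. Define
d_μ(x,y) := (1/2)·(μ(G⋔([x,y))).toReal + μ(G⋔((x,y])).toReal). Then d_μ is a straight
pseudo-distance on ℍ. -/

open OnePoint MeasureTheory
open scoped UpperHalfPlane

noncomputable section

/-- The geodesic of ℍ with ideal endpoints the unordered pair `s` of boundary points:
a Euclidean half-circle for a pair of distinct reals, a vertical line for a pair
`{x, ∞}`, and ∅ for a diagonal pair. -/
def geod (s : Sym2 (OnePoint ℝ)) : Set ℍ :=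
  {z | (∃ a b : ℝ, a ≠ b ∧ s = s((a : OnePoint ℝ), (b : OnePoint ℝ)) ∧
          ‖(z : ℂ) - (↑a + ↑b) / 2‖ = |b - a| / 2) ∨
       (∃ x : ℝ, s = s((x : OnePoint ℝ), ∞) ∧ z.re = x)}

/-- The half-open hyperbolic segment `[x,y)`; the segment `(x,y]` is `segCO y x`. -/
def segCO (x y : ℍ) : Set ℍ := {z | dist x z + dist z y = dist x y} \ {y}

/-- `G⋔(I)`: the set of geodesics crossing `I` in exactly one point. -/
def Gcross (I : Set ℍ) : Set (Sym2 (OnePoint ℝ)) := {s | ∃ z, geod s ∩ I = {z}}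

open UpperHalfPlane Set Real
open scoped MatrixGroups

/-! A geodesic `S` of `ℍ` is the preimage of the imaginary axis under an isometry from `SL(2, ℝ)`,
so it is the zero set of a continuous function `f` (the real part after that isometry) which is
injective or constant on every hyperbolic segment. Hence `S` crosses `[a,b)` exactly once iff
`a ∈ S, b ∉ S` or `f a * f b < 0`, and this sign condition shows that a geodesic crossing `[x,z)`
crosses `[x,y)` or `[y,z)`: `G⋔([x,z)) ⊆ G⋔([x,y)) ∪ G⋔([y,z))`, the triangle inequality.
If `y` lies on the segment from `x` to `z`, then `[x,z) = [x,y) ⊔ [y,z)` lies on one geodesic,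
which every other geodesic meets at most once; so `G⋔([x,z))` is the disjoint union of
`G⋔([x,y))` and `G⋔([y,z))`, and additivity of `μ` gives straightness. -/

section MetricSegment

variable {X Y : Type*}

def seg [Dist X] (x z : X) : Set X := {w | dist x w + dist w z = dist x z}

lemma mem_seg [Dist X] {x z w : X} : w ∈ seg x z ↔ dist x w + dist w z = dist x z := Iff.rfl

variable [MetricSpace X] [MetricSpace Y]

lemma left_mem_seg (x z : X) : x ∈ seg x z := by simp [mem_seg]

lemma right_mem_seg (x z : X) : z ∈ seg x z := by simp [mem_seg]

lemma seg_comm (x z : X) : seg x z = seg z x := by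
  ext w; simp only [mem_seg, dist_comm, add_comm]

lemma seg_self (x : X) : seg x x = {x} := by
  ext w
  simp only [mem_seg, dist_self, mem_singleton_iff]
  constructor
  · intro h
    rw [dist_comm x w] at h
    exact dist_eq_zero.mp (by linarith [dist_nonneg (x := w) (y := x)])
  · rintro rfl; simp

lemma seg_subset_seg_left {x y z : X} (hy : y ∈ seg x z) : seg x y ⊆ seg x z := by
  intro w hw
  simp only [mem_seg] at hy hw ⊢
  linarith [dist_triangle x w z, dist_triangle w y z]

lemma seg_subset_seg_right {x y z : X} (hy : y ∈ seg x z) : seg y z ⊆ seg x z := by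
  intro w hw
  simp only [mem_seg] at hy hw ⊢
  linarith [dist_triangle x w z, dist_triangle x y w]

lemma eq_of_mem_seg_of_mem_seg {x y z w : X} (hy : y ∈ seg x z) (hxy : w ∈ seg x y)
    (hyz : w ∈ seg y z) : w = y := by
  simp only [mem_seg] at hy hxy hyz
  exact dist_le_zero.mp (by linarith [dist_triangle x w z, dist_comm y w])

lemma Isometry.preimage_seg {φ : X → Y} (hφ : Isometry φ) (x z : X) :
    φ ⁻¹' seg (φ x) (φ z) = seg x z := by
  ext w; simp only [mem_seg, mem_preimage, hφ.dist_eq]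

lemma IsometryEquiv.image_seg (φ : X ≃ᵢ Y) (x z : X) : φ '' seg x z = seg (φ x) (φ z) := by
  rw [← φ.isometry.preimage_seg, φ.surjective.image_preimage]

lemma Real.seg_eq_uIcc (a b : ℝ) : seg a b = uIcc a b := by
  ext t
  rw [mem_seg, dist_add_dist_eq_iff, ← mem_segment_iff_wbtw, segment_eq_uIcc]

end MetricSegment

lemma UpperHalfPlane.norm_coe_sub_ofReal_sq (z : ℍ) (c : ℝ) :
    ‖(z : ℂ) - c‖ ^ 2 = (z.re - c) ^ 2 + z.im ^ 2 := by
  rw [Complex.sq_norm, Complex.normSq_apply]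
  simp only [Complex.sub_re, Complex.sub_im, coe_re, coe_im, Complex.ofReal_re,
    Complex.ofReal_im, sub_zero]
  ring

lemma UpperHalfPlane.norm_coe_sub_ofReal_eq_iff {z : ℍ} {c r : ℝ} (hr : 0 ≤ r) :
    ‖(z : ℂ) - c‖ = r ↔ (z.re - c) ^ 2 + z.im ^ 2 = r ^ 2 := by
  rw [← norm_coe_sub_ofReal_sq, sq_eq_sq₀ (norm_nonneg _) hr]

def IsGeodesic (S : Set ℍ) : Prop :=
  (∃ c r : ℝ, 0 < r ∧ S = {z : ℍ | ‖(z : ℂ) - c‖ = r}) ∨ ∃ t : ℝ, S = {z : ℍ | z.re = t}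

lemma geod_mk_coe_coe {a b : ℝ} (hab : a ≠ b) :
    geod s((a : OnePoint ℝ), (b : OnePoint ℝ)) =
      {z : ℍ | ‖(z : ℂ) - ((a + b) / 2 : ℝ)‖ = |b - a| / 2} := by
  ext z
  simp only [geod, mem_ofPred, Sym2.eq_iff, OnePoint.coe_eq_coe, OnePoint.coe_ne_infty,
    and_false, false_and, or_false, exists_false, Complex.ofReal_div, Complex.ofReal_add,
    Complex.ofReal_ofNat]
  constructor
  · rintro ⟨a', b', -, ⟨rfl, rfl⟩ | ⟨rfl, rfl⟩, hz⟩
    · exact hz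
    · rwa [add_comm, abs_sub_comm]
  · exact fun hz => ⟨a, b, hab, Or.inl ⟨rfl, rfl⟩, hz⟩

lemma geod_mk_coe_infty (x : ℝ) : geod s((x : OnePoint ℝ), ∞) = {z | z.re = x} := by
  ext z
  simp only [geod, mem_ofPred, Sym2.eq_iff, OnePoint.coe_eq_coe, OnePoint.infty_ne_coe,
    OnePoint.coe_ne_infty, and_true, and_false, false_and, or_false, exists_false, false_or]
  constructor
  · rintro ⟨x', rfl, hz⟩
    exact hz
  · exact fun hz => ⟨x, rfl, hz⟩

lemma isGeodesic_geod {s : Sym2 (OnePoint ℝ)} (h : (geod s).Nonempty) : IsGeodesic (geod s) := by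
  obtain ⟨z, ⟨a, b, hab, rfl, -⟩ | ⟨x, rfl, -⟩⟩ := h
  · refine Or.inl ⟨(a + b) / 2, |b - a| / 2, by positivity [sub_ne_zero.2 hab.symm], ?_⟩
    exact geod_mk_coe_coe hab
  · exact Or.inr ⟨x, geod_mk_coe_infty x⟩

lemma exists_isGeodesic_mem_mem (x z : ℍ) : ∃ S, IsGeodesic S ∧ x ∈ S ∧ z ∈ S := by
  by_cases h : x.re = z.re
  · exact ⟨_, Or.inr ⟨x.re, rfl⟩, rfl, h.symm⟩
  -- the centre is where the perpendicular bisector of `x z` meets the real axis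
  obtain ⟨c, hc⟩ : ∃ c : ℝ, 2 * (x.re - z.re) * c = x.re ^ 2 + x.im ^ 2 - (z.re ^ 2 + z.im ^ 2) :=
    ⟨_, mul_div_cancel₀ _ (mul_ne_zero two_ne_zero (sub_ne_zero.2 h))⟩
  have hr : 0 < ‖(x : ℂ) - c‖ := norm_pos_iff.2 fun h0 => x.im_ne_zero <| by
    simpa using congrArg Complex.im h0
  refine ⟨_, Or.inl ⟨c, _, hr, rfl⟩, rfl, ?_⟩
  rw [mem_ofPred, norm_coe_sub_ofReal_eq_iff (norm_nonneg _), norm_coe_sub_ofReal_sq]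
  linear_combination hc

lemma IsGeodesic.injOn_re_or_subsingleton {L : Set ℍ} (hL : IsGeodesic L) :
    InjOn re L ∨ (re '' L).Subsingleton := by
  rcases hL with ⟨c, r, hr, rfl⟩ | ⟨t, rfl⟩
  · refine Or.inl fun p hp q hq hpq => ext_re_im hpq ?_
    rw [mem_ofPred, norm_coe_sub_ofReal_eq_iff hr.le] at hp hq
    rw [hpq] at hp
    rw [← sq_eq_sq₀ p.im_pos.le q.im_pos.le]
    linarith
  · exact Or.inr <| (subsingleton_singleton (a := t)).anti <| by
      rintro _ ⟨p, hp, rfl⟩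
      exact hp

lemma exists_SL2_re_smul_eq_zero_iff_vertical (t : ℝ) :
    ∃ g : SL(2, ℝ), ∀ w : ℍ, (g • w).re = 0 ↔ w.re = t := by
  let g : SL(2, ℝ) := ⟨!![1, -t; 0, 1], by simp [Matrix.det_fin_two]⟩
  refine ⟨g, fun w => ?_⟩
  have h : ((g • w : ℍ) : ℂ) = w - t := by
    rw [coe_specialLinearGroup_apply]
    simp [g, sub_eq_add_neg]
  rw [← coe_re, h]
  simp [sub_eq_zero]

-- the Cayley-type map `w ↦ (r + (w - c)) / (r - (w - c))`, normalised to determinant one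
lemma exists_SL2_re_smul_eq_zero_iff_circle (c : ℝ) {r : ℝ} (hr : 0 < r) :
    ∃ g : SL(2, ℝ), ∀ w : ℍ, (g • w).re = 0 ↔ ‖(w : ℂ) - c‖ = r := by
  set k := (√(2 * r))⁻¹
  have hk : k ^ 2 * (2 * r) = 1 := by
    rw [inv_pow, Real.sq_sqrt (by positivity), inv_mul_cancel₀ (by positivity)]
  let g : SL(2, ℝ) := ⟨!![k, k * (r - c); -k, k * (r + c)], by
    simp [Matrix.det_fin_two]; linear_combination hk⟩
  refine ⟨g, fun w => ?_⟩
  have hk0 : (k : ℂ) ≠ 0 :=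
    Complex.ofReal_ne_zero.2 (inv_pos.2 (Real.sqrt_pos.2 (by linarith))).ne'
  have hN : Complex.normSq ((r : ℂ) - ((w : ℂ) - c)) ≠ 0 := fun h0 => w.im_ne_zero <| by
    simpa using congrArg Complex.im (Complex.normSq_eq_zero.1 h0)
  have h : ((g • w : ℍ) : ℂ) = (r + ((w : ℂ) - c)) / (r - ((w : ℂ) - c)) := by
    rw [coe_specialLinearGroup_apply, ← mul_div_mul_left ((r : ℂ) + ((w : ℂ) - c)) _ hk0]
    congr 1 <;> simp [g] <;> ring
  rw [← coe_re, h, Complex.div_re, ← add_div, div_eq_zero_iff, or_iff_left hN,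
    norm_coe_sub_ofReal_eq_iff hr.le]
  simp only [Complex.add_re, Complex.sub_re, Complex.add_im, Complex.sub_im, Complex.ofReal_re,
    Complex.ofReal_im, coe_re, coe_im]
  constructor <;> intro <;> linarith

lemma IsGeodesic.exists_isometryEquiv {S : Set ℍ} (hS : IsGeodesic S) :
    ∃ φ : ℍ ≃ᵢ ℍ, ∀ w, w ∈ S ↔ (φ w).re = 0 := by
  obtain ⟨g, hg⟩ : ∃ g : SL(2, ℝ), ∀ w : ℍ, (g • w).re = 0 ↔ w ∈ S := by
    rcases hS with ⟨c, r, hr, rfl⟩ | ⟨t, rfl⟩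
    exacts [exists_SL2_re_smul_eq_zero_iff_circle c hr, exists_SL2_re_smul_eq_zero_iff_vertical t]
  exact ⟨IsometryEquiv.constSMul g, fun w => (hg w).symm⟩

def imAxis (t : ℝ) : ℍ := ⟨⟨0, exp t⟩, exp_pos t⟩

lemma isometry_imAxis : Isometry imAxis := isometry_vertical_line 0

lemma mem_range_imAxis {w : ℍ} : w ∈ range imAxis ↔ w.re = 0 := by
  refine ⟨?_, fun h => ⟨log w.im, ext_re_im h.symm (exp_log w.im_pos)⟩⟩
  rintro ⟨t, rfl⟩
  rfl

lemma re_eq_of_dist_eq_dist_log_im {z w : ℍ} (h : dist z w = dist (log z.im) (log w.im)) :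
    z.re = w.re := by
  -- `p` has the height of `z` and the real part of `w`; `cosh_dist` turns `dist z w = dist p w`
  -- into an equality of Euclidean distances
  let p : ℍ := ⟨⟨w.re, z.im⟩, z.im_pos⟩
  have hp : dist p w = dist (log z.im) (log w.im) := dist_of_re_eq rfl
  have hcosh := cosh_dist z w
  rw [h, ← hp, cosh_dist] at hcosh
  have hd : 2 * z.im * w.im ≠ 0 := by have := z.im_pos; have := w.im_pos; positivity
  have : dist (z : ℂ) w ^ 2 = dist (p : ℂ) w ^ 2 :=
    ((div_left_inj' hd).1 (add_left_cancel hcosh)).symm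
  rw [Complex.dist_eq_re_im, Complex.dist_eq_re_im, Real.sq_sqrt (by positivity),
    Real.sq_sqrt (by positivity)] at this
  have hre : z.re - w.re = 0 := by simpa [p] using this
  linarith

lemma re_eq_of_mem_seg {z w p : ℍ} (h : z.re = w.re) (hp : p ∈ seg z w) : p.re = z.re := by
  rw [mem_seg, dist_of_re_eq h] at hp
  refine (re_eq_of_dist_eq_dist_log_im (le_antisymm ?_ (dist_log_im_le z p))).symm
  linarith [dist_log_im_le p w, dist_triangle (log z.im) (log p.im) (log w.im)]

lemma seg_imAxis (a b : ℝ) : seg (imAxis a) (imAxis b) = imAxis '' uIcc a b := by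
  have hsub : seg (imAxis a) (imAxis b) ⊆ range imAxis := fun p hp =>
    mem_range_imAxis.2 (re_eq_of_mem_seg (z := imAxis a) (w := imAxis b) rfl hp)
  rw [← Real.seg_eq_uIcc, ← isometry_imAxis.preimage_seg, image_preimage_eq_of_subset hsub]

lemma IsGeodesic.exists_isometry_seg_eq_image {S : Set ℍ} (hS : IsGeodesic S) :
    ∃ γ : ℝ → ℍ, Isometry γ ∧ range γ = S ∧ ∀ a b, seg (γ a) (γ b) = γ '' uIcc a b := by
  obtain ⟨φ, hφ⟩ := hS.exists_isometryEquiv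
  refine ⟨φ.symm ∘ imAxis, φ.symm.isometry.comp isometry_imAxis, ?_, fun a b => ?_⟩
  · ext w
    rw [range_comp, φ.image_symm, mem_preimage, mem_range_imAxis, hφ]
  · rw [Function.comp_apply, Function.comp_apply, ← φ.symm.image_seg, seg_imAxis, image_comp]

lemma IsGeodesic.seg_subset {S : Set ℍ} (hS : IsGeodesic S) {x z : ℍ} (hx : x ∈ S) (hz : z ∈ S) :
    seg x z ⊆ S := by
  obtain ⟨γ, -, rfl, hseg⟩ := hS.exists_isometry_seg_eq_image
  obtain ⟨⟨a, rfl⟩, ⟨b, rfl⟩⟩ := And.intro hx hz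
  rw [hseg]
  exact image_subset_range _ _

lemma exists_isometry_seg_eq_image (x z : ℍ) :
    ∃ γ : ℝ → ℍ, Isometry γ ∧ (∀ a b, seg (γ a) (γ b) = γ '' uIcc a b) ∧
      x ∈ range γ ∧ z ∈ range γ := by
  obtain ⟨S, hS, hx, hz⟩ := exists_isGeodesic_mem_mem x z
  obtain ⟨γ, hγ, rfl, hseg⟩ := hS.exists_isometry_seg_eq_image
  exact ⟨γ, hγ, hseg, hx, hz⟩

lemma isPreconnected_seg (x z : ℍ) : IsPreconnected (seg x z) := by
  obtain ⟨γ, hγ, hseg, ⟨a, rfl⟩, ⟨b, rfl⟩⟩ := exists_isometry_seg_eq_image x z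
  rw [hseg]
  exact isPreconnected_uIcc.image _ hγ.continuous.continuousOn

lemma seg_subset_union {x y z : ℍ} (hy : y ∈ seg x z) : seg x z ⊆ seg x y ∪ seg y z := by
  obtain ⟨γ, -, hseg, ⟨a, rfl⟩, ⟨b, rfl⟩⟩ := exists_isometry_seg_eq_image x z
  obtain ⟨c, -, rfl⟩ := hseg a b ▸ hy
  rw [hseg, hseg, hseg, ← image_union]
  exact image_mono uIcc_subset_uIcc_union_uIcc

lemma exists_mem_seg_ne_ne {x z : ℍ} (hxz : x ≠ z) : ∃ m ∈ seg x z, m ≠ x ∧ m ≠ z := by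
  have hd := dist_pos.2 hxz
  obtain ⟨m, hm, hxm⟩ := (isPreconnected_seg x z).intermediate_value (left_mem_seg x z)
    (right_mem_seg x z) (continuous_const.dist continuous_id).continuousOn
    (show dist x z / 2 ∈ Icc (dist x x) (dist x z) by rw [dist_self]; constructor <;> linarith)
  refine ⟨m, hm, ?_, ?_⟩
  all_goals rintro rfl; simp only [id_eq, dist_self] at hxm; linarith

lemma injOn_re_or_subsingleton_seg (x z : ℍ) :
    InjOn re (seg x z) ∨ (re '' seg x z).Subsingleton := by
  obtain ⟨L, hL, hx, hz⟩ := exists_isGeodesic_mem_mem x z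
  have hsub := hL.seg_subset hx hz
  exact hL.injOn_re_or_subsingleton.imp (·.mono hsub) (·.anti (image_mono hsub))

/-- A defining function of `S` whose sign tells the two sides of `S` apart. -/
structure IsSideFn (S : Set ℍ) (f : ℍ → ℝ) : Prop where
  continuous : Continuous f
  eq_zero_iff : ∀ w, f w = 0 ↔ w ∈ S
  injOn_or_subsingleton : ∀ x z, InjOn f (seg x z) ∨ (f '' seg x z).Subsingleton

lemma exists_isSideFn_geod (s : Sym2 (OnePoint ℝ)) : ∃ f, IsSideFn (geod s) f := by
  rcases (geod s).eq_empty_or_nonempty with h | h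
  · refine ⟨fun _ => 1, continuous_const, fun w => by simp [h], fun x z => Or.inr ?_⟩
    exact subsingleton_singleton.anti (image_subset_iff.2 fun _ _ => rfl)
  obtain ⟨φ, hφ⟩ := (isGeodesic_geod h).exists_isometryEquiv
  refine ⟨re ∘ φ, continuous_re.comp φ.continuous, fun w => (hφ w).symm, fun x z => ?_⟩
  rw [image_comp, φ.image_seg]
  exact (injOn_re_or_subsingleton_seg (φ x) (φ z)).imp_left
    (·.comp φ.injective.injOn (φ.image_seg x z ▸ mapsTo_image φ (seg x z)))

namespace IsSideFn

variable {S : Set ℍ} {f : ℍ → ℝ}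

lemma neg (hf : IsSideFn S f) : IsSideFn S (-f) where
  continuous := hf.continuous.neg
  eq_zero_iff w := by rw [Pi.neg_apply, neg_eq_zero, hf.eq_zero_iff]
  injOn_or_subsingleton x z := (hf.injOn_or_subsingleton x z).imp
    (neg_injective.comp_injOn ·) (fun h => by
      rw [show -f = Neg.neg ∘ f from rfl, image_comp]; exact h.image _)

lemma seg_subset_or_subsingleton (hf : IsSideFn S f) (x z : ℍ) :
    seg x z ⊆ S ∨ (S ∩ seg x z).Subsingleton := by
  refine or_iff_not_imp_right.2 fun h => ?_
  obtain ⟨p, ⟨hpS, hp⟩, q, ⟨hqS, hq⟩, hpq⟩ := not_subsingleton_iff.1 h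
  rw [← hf.eq_zero_iff] at hpS hqS
  rcases hf.injOn_or_subsingleton x z with hinj | hconst
  · exact absurd (hinj hp hq (hpS.trans hqS.symm)) hpq
  · intro w hw
    rw [← hf.eq_zero_iff, ← hpS]
    exact hconst (mem_image_of_mem f hw) (mem_image_of_mem f hp)

lemma false_of_pos_of_pos (hf : IsSideFn S f) {a b w : ℍ} (hw : w ∈ seg a b) (hfw : f w = 0)
    (ha : 0 < f a) (hb : 0 < f b) : False := by
  set v := min (f a) (f b)
  have hv : 0 < v := lt_min ha hb
  -- `f` takes the value `v` once on each side of `w`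
  obtain ⟨p, hp, hfp⟩ := (isPreconnected_seg a w).intermediate_value (right_mem_seg a w)
    (left_mem_seg a w) hf.continuous.continuousOn (show v ∈ Icc (f w) (f a) from
      ⟨hfw ▸ hv.le, min_le_left _ _⟩)
  obtain ⟨q, hq, hfq⟩ := (isPreconnected_seg w b).intermediate_value (left_mem_seg w b)
    (right_mem_seg w b) hf.continuous.continuousOn (show v ∈ Icc (f w) (f b) from
      ⟨hfw ▸ hv.le, min_le_right _ _⟩)
  have hpq : p ≠ q := by
    rintro rfl
    rw [eq_of_mem_seg_of_mem_seg hw hp hq, hfw] at hfp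
    exact hv.ne hfp
  rcases hf.injOn_or_subsingleton a b with hinj | hconst
  · exact hpq (hinj (seg_subset_seg_left hw hp) (seg_subset_seg_right hw hq) (hfp.trans hfq.symm))
  · exact ha.ne' <|
      (hconst (mem_image_of_mem f (left_mem_seg a b)) (mem_image_of_mem f hw)).trans hfw

lemma mul_neg_of_mem_seg (hf : IsSideFn S f) {a b w : ℍ} (hw : w ∈ seg a b) (hfw : f w = 0)
    (ha : f a ≠ 0) (hb : f b ≠ 0) : f a * f b < 0 := by
  rcases ha.lt_or_gt with ha | ha <;> rcases hb.lt_or_gt with hb | hb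
  · exact (hf.neg.false_of_pos_of_pos hw (by simp [hfw]) (neg_pos.2 ha) (neg_pos.2 hb)).elim
  · exact mul_neg_of_neg_of_pos ha hb
  · exact mul_neg_of_pos_of_neg ha hb
  · exact (hf.false_of_pos_of_pos hw hfw ha hb).elim

end IsSideFn

lemma segCO_eq (x y : ℍ) : segCO x y = seg x y \ {y} := rfl

lemma segCO_subset_seg (x y : ℍ) : segCO x y ⊆ seg x y := sdiff_subset

lemma segCO_self (x : ℍ) : segCO x x = ∅ := by
  rw [segCO_eq, seg_self, sdiff_self]

lemma segCO_ne_singleton (a b w : ℍ) : segCO a b ≠ {w} := by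
  intro h
  rcases eq_or_ne a b with rfl | hab
  · exact singleton_ne_empty w (h ▸ segCO_self a)
  obtain ⟨m, hm, hma, hmb⟩ := exists_mem_seg_ne_ne hab
  have ha : a ∈ segCO a b := ⟨left_mem_seg a b, hab⟩
  have hm' : m ∈ segCO a b := ⟨hm, hmb⟩
  rw [h] at ha hm'
  exact hma (hm'.trans ha.symm)

lemma segCO_union_segCO {x y z : ℍ} (hy : y ∈ seg x z) : segCO x y ∪ segCO y z = segCO x z := by
  have hzy : z ∈ seg x y → z = y := fun hz => eq_of_mem_seg_of_mem_seg hy hz (right_mem_seg y z)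
  ext w
  simp only [segCO_eq, mem_union, mem_sdiff, mem_singleton_iff]
  constructor
  · rintro (⟨hw, hwy⟩ | ⟨hw, hwz⟩)
    · exact ⟨seg_subset_seg_left hy hw, fun hwz => hwy (hwz ▸ hzy (hwz ▸ hw))⟩
    · exact ⟨seg_subset_seg_right hy hw, hwz⟩
  · rintro ⟨hw, hwz⟩
    rcases eq_or_ne w y with rfl | hwy
    · exact Or.inr ⟨left_mem_seg w z, hwz⟩
    · exact (seg_subset_union hy hw).imp (⟨·, hwy⟩) (⟨·, hwz⟩)

lemma disjoint_segCO_segCO {x y z : ℍ} (hy : y ∈ seg x z) : Disjoint (segCO x y) (segCO y z) :=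
  disjoint_left.2 fun _ hxy hyz => hxy.2 (eq_of_mem_seg_of_mem_seg hy hxy.1 hyz.1)

lemma mem_Gcross {s : Sym2 (OnePoint ℝ)} {I : Set ℍ} : s ∈ Gcross I ↔ ∃ w, geod s ∩ I = {w} :=
  Iff.rfl

lemma Gcross_empty : Gcross ∅ = ∅ := by
  simp [Gcross, eq_comm (a := (∅ : Set ℍ))]

lemma notMem_Gcross_segCO_of_seg_subset {s : Sym2 (OnePoint ℝ)} {a b : ℍ}
    (h : seg a b ⊆ geod s) : s ∉ Gcross (segCO a b) := by
  rintro ⟨w, hw⟩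
  rw [inter_eq_right.2 ((segCO_subset_seg a b).trans h)] at hw
  exact segCO_ne_singleton a b w hw

lemma mem_Gcross_iff_nonempty {s : Sym2 (OnePoint ℝ)} {I J : Set ℍ}
    (hJ : (geod s ∩ J).Subsingleton) (hI : I ⊆ J) : s ∈ Gcross I ↔ (geod s ∩ I).Nonempty := by
  rw [mem_Gcross, exists_eq_singleton_iff_nonempty_subsingleton,
    and_iff_left (hJ.anti (inter_subset_inter_right _ hI))]

lemma IsSideFn.exists_inter_segCO_eq_singleton_iff {S : Set ℍ} {f : ℍ → ℝ} (hf : IsSideFn S f)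
    (a b : ℍ) : (∃ w, S ∩ segCO a b = {w}) ↔ f a = 0 ∧ f b ≠ 0 ∨ f a * f b < 0 := by
  have hsub : S ∩ segCO a b ⊆ S ∩ seg a b := inter_subset_inter_right _ (segCO_subset_seg a b)
  constructor
  · rintro ⟨w, hw⟩
    have hwS : w ∈ S ∩ segCO a b := hw ▸ rfl
    have hsing : (S ∩ seg a b).Subsingleton := (hf.seg_subset_or_subsingleton a b).resolve_left
      fun h => segCO_ne_singleton a b w
        ((inter_eq_right.2 ((segCO_subset_seg a b).trans h)).symm.trans hw)
    have hb : f b ≠ 0 := fun hb =>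
      hwS.2.2 (hsing (hsub hwS) ⟨(hf.eq_zero_iff b).1 hb, right_mem_seg a b⟩)
    by_cases ha : f a = 0
    · exact Or.inl ⟨ha, hb⟩
    · exact Or.inr (hf.mul_neg_of_mem_seg hwS.2.1 ((hf.eq_zero_iff w).2 hwS.1) ha hb)
  · intro h
    have hb : f b ≠ 0 := h.elim (·.2) fun h => right_ne_zero_of_mul h.ne
    have hsing : (S ∩ seg a b).Subsingleton := (hf.seg_subset_or_subsingleton a b).resolve_left
      fun h => hb ((hf.eq_zero_iff b).2 (h (right_mem_seg a b)))
    obtain ⟨w, hw, hfw⟩ : ∃ w ∈ seg a b, f w = 0 := by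
      rcases h with ⟨ha, -⟩ | h
      · exact ⟨a, left_mem_seg a b, ha⟩
      refine (isPreconnected_iff_ordConnected.1 ((isPreconnected_seg a b).image f
        hf.continuous.continuousOn)).uIcc_subset (mem_image_of_mem f (left_mem_seg a b))
        (mem_image_of_mem f (right_mem_seg a b)) ?_
      rcases mul_neg_iff.1 h with ⟨h1, h2⟩ | ⟨h1, h2⟩
      exacts [mem_uIcc.2 (Or.inr ⟨h2.le, h1.le⟩), mem_uIcc.2 (Or.inl ⟨h1.le, h2.le⟩)]
    exact exists_eq_singleton_iff_nonempty_subsingleton.2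
      ⟨⟨w, (hf.eq_zero_iff w).1 hfw, hw, fun h => hb (h ▸ hfw)⟩, hsing.anti hsub⟩

lemma sign_change_trans {a b c : ℝ} (h : a = 0 ∧ c ≠ 0 ∨ a * c < 0) :
    (a = 0 ∧ b ≠ 0 ∨ a * b < 0) ∨ (b = 0 ∧ c ≠ 0 ∨ b * c < 0) := by
  have hc : c ≠ 0 := h.elim (·.2) fun h => right_ne_zero_of_mul h.ne
  rcases eq_or_ne b 0 with hb | hb
  · exact Or.inr (Or.inl ⟨hb, hc⟩)
  rcases h with ⟨ha, -⟩ | hac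
  · exact Or.inl (Or.inl ⟨ha, hb⟩)
  rcases lt_or_ge (a * b) 0 with hab | hab
  · exact Or.inl (Or.inr hab)
  · refine Or.inr (Or.inr ?_)
    nlinarith [mul_self_pos.2 hb]

lemma Gcross_segCO_subset_union (x y z : ℍ) :
    Gcross (segCO x z) ⊆ Gcross (segCO x y) ∪ Gcross (segCO y z) := by
  intro s hs
  obtain ⟨f, hf⟩ := exists_isSideFn_geod s
  simp only [mem_union, mem_Gcross, hf.exists_inter_segCO_eq_singleton_iff] at hs ⊢
  exact sign_change_trans hs

lemma Gcross_segCO_union_Gcross_segCO {x y z : ℍ} (hy : y ∈ seg x z) :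
    Gcross (segCO x y) ∪ Gcross (segCO y z) = Gcross (segCO x z) := by
  ext s
  obtain ⟨f, hf⟩ := exists_isSideFn_geod s
  rcases hf.seg_subset_or_subsingleton x z with h | h
  · simp only [mem_union, notMem_Gcross_segCO_of_seg_subset h,
      notMem_Gcross_segCO_of_seg_subset ((seg_subset_seg_left hy).trans h),
      notMem_Gcross_segCO_of_seg_subset ((seg_subset_seg_right hy).trans h), or_self]
  · have hxy := (segCO_subset_seg x y).trans (seg_subset_seg_left hy)
    have hyz := (segCO_subset_seg y z).trans (seg_subset_seg_right hy)
    rw [mem_union, mem_Gcross_iff_nonempty h hxy, mem_Gcross_iff_nonempty h hyz,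
      mem_Gcross_iff_nonempty h (segCO_subset_seg x z), ← segCO_union_segCO hy,
      inter_union_distrib_left, union_nonempty]

lemma disjoint_Gcross_segCO {x y z : ℍ} (hy : y ∈ seg x z) :
    Disjoint (Gcross (segCO x y)) (Gcross (segCO y z)) := by
  refine disjoint_left.2 fun s hxy hyz => ?_
  obtain ⟨f, hf⟩ := exists_isSideFn_geod s
  rcases hf.seg_subset_or_subsingleton x z with h | h
  · exact notMem_Gcross_segCO_of_seg_subset ((seg_subset_seg_left hy).trans h) hxy
  · have hsxy := (segCO_subset_seg x y).trans (seg_subset_seg_left hy)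
    have hsyz := (segCO_subset_seg y z).trans (seg_subset_seg_right hy)
    obtain ⟨p, hpS, hp⟩ := (mem_Gcross_iff_nonempty h hsxy).1 hxy
    obtain ⟨q, hqS, hq⟩ := (mem_Gcross_iff_nonempty h hsyz).1 hyz
    have hpq : p = q := h ⟨hpS, hsxy hp⟩ ⟨hqS, hsyz hq⟩
    exact disjoint_left.1 (disjoint_segCO_segCO hy) hp (hpq ▸ hq)

theorem dmu_is_straight_pseudo_distance [MeasurableSpace (Sym2 (OnePoint ℝ))]
    (μ : Measure (Sym2 (OnePoint ℝ)))
    (hmeas : ∀ x y : ℍ, MeasurableSet (Gcross (segCO x y)))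
    (hfin : ∀ x y : ℍ, μ (Gcross (segCO x y)) < ⊤) :
    let d : ℍ → ℍ → ℝ := fun x y =>
      (1 / 2) * ((μ (Gcross (segCO x y))).toReal + (μ (Gcross (segCO y x))).toReal)
    (∀ x y : ℍ, 0 ≤ d x y) ∧
    (∀ x : ℍ, d x x = 0) ∧
    (∀ x y : ℍ, d x y = d y x) ∧
    (∀ x y z : ℍ, d x z ≤ d x y + d y z) ∧
    (∀ x y z : ℍ, dist x y + dist y z = dist x z → d x z = d x y + d y z) := by
  intro d
  have hle (x y z : ℍ) : μ.real (Gcross (segCO x z)) ≤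
      μ.real (Gcross (segCO x y)) + μ.real (Gcross (segCO y z)) :=
    (measureReal_mono (Gcross_segCO_subset_union x y z)
      (measure_union_lt_top (hfin x y) (hfin y z)).ne).trans (measureReal_union_le _ _)
  have hadd {x y z : ℍ} (hy : y ∈ seg x z) : μ.real (Gcross (segCO x z)) =
      μ.real (Gcross (segCO x y)) + μ.real (Gcross (segCO y z)) := by
    rw [← Gcross_segCO_union_Gcross_segCO hy,
      measureReal_union (disjoint_Gcross_segCO hy) (hmeas y z) (hfin x y).ne (hfin y z).ne]
  simp only [d, ← measureReal_def]
  refine ⟨fun x y => by positivity, fun x => by simp [segCO_self, Gcross_empty],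
    fun x y => by ring, fun x y z => by linarith [hle x y z, hle z y x], fun x y z h => ?_⟩
  rw [hadd h, hadd (x := z) (z := x) (by rwa [seg_comm])]
  ring
end
end

section
/- Let d be a straight pseudo-distance on ℍ, let a ≤ b be reals, and let c : ℝ → ℍ be such that for all a ≤ s ≤ t ≤ u ≤ b one has dist (c s) (c t) + dist (c t) (c u) = dist (c s) (c u) (i.e. c is a weakly monotone parametrization of a hyperbolic geodesic segment on [a,b]). Then for every n ≥ 1 and every partition a = t₀ ≤ t₁ ≤ … ≤ tₙ = b, the partition sum Σ_{i<n} d (c tᵢ) (c tᵢ₊₁) equals d (c a) (c b); consequently the d-length of c over [a,b], defined as the supremum of all such partition sums, equals d (c a) (c b). -/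
/- STATEMENT 6: Let d be a straight pseudo-distance on ℍ, a ≤ b reals, and c : ℝ → ℍ a
weakly monotone parametrization of a hyperbolic geodesic segment on [a,b]. Then every
partition sum Σ_{i<n} d (c tᵢ) (c tᵢ₊₁) over a partition a = t₀ ≤ … ≤ tₙ = b equals
d (c a) (c b); consequently the d-length of c over [a,b] (the supremum of all such
partition sums) equals d (c a) (c b). -/

open scoped UpperHalfPlane

noncomputable section

theorem length_of_geodesic_segment_eq_pseudo_distance
    (d : ℍ → ℍ → ℝ)
    (hpos : ∀ x y : ℍ, 0 ≤ d x y)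
    (hrefl : ∀ x : ℍ, d x x = 0)
    (hsymm : ∀ x y : ℍ, d x y = d y x)
    (htri : ∀ x y z : ℍ, d x z ≤ d x y + d y z)
    (hstraight : ∀ x y z : ℍ, dist x y + dist y z = dist x z → d x y + d y z = d x z)
    (a b : ℝ) (hab : a ≤ b) (c : ℝ → ℍ)
    (hc : ∀ s t u : ℝ, a ≤ s → s ≤ t → t ≤ u → u ≤ b →
      dist (c s) (c t) + dist (c t) (c u) = dist (c s) (c u)) :
    (∀ n : ℕ, 1 ≤ n → ∀ t : ℕ → ℝ, t 0 = a → t n = b → (∀ i < n, t i ≤ t (i + 1)) →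
      ∑ i ∈ Finset.range n, d (c (t i)) (c (t (i + 1))) = d (c a) (c b)) ∧
    sSup {x : ℝ | ∃ n : ℕ, 1 ≤ n ∧ ∃ t : ℕ → ℝ, t 0 = a ∧ t n = b ∧
        (∀ i < n, t i ≤ t (i + 1)) ∧
        x = ∑ i ∈ Finset.range n, d (c (t i)) (c (t (i + 1)))} = d (c a) (c b) := by
  -- monotonicity helper
  have mono : ∀ (t : ℕ → ℝ) (n : ℕ), (∀ i < n, t i ≤ t (i + 1)) → t 0 ≤ t n := by
    intro t n h
    induction n with
    | zero => exact le_refl _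
    | succ m ih =>
      exact le_trans (ih fun i hi => h i (Nat.lt_succ_of_lt hi)) (h m (Nat.lt_succ_self m))
  -- General lemma by induction on n
  have key : ∀ n : ℕ, ∀ t : ℕ → ℝ, (∀ i < n, t i ≤ t (i + 1)) → a ≤ t 0 → t n ≤ b →
      ∑ i ∈ Finset.range n, d (c (t i)) (c (t (i + 1))) = d (c (t 0)) (c (t n)) := by
    intro n
    induction n with
    | zero => intro t _ _ _; simp [hrefl]
    | succ n ih =>
      intro t hmono h0 hn
      have hmono' : ∀ i < n, t i ≤ t (i + 1) := fun i hi => hmono i (Nat.lt_succ_of_lt hi)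
      have hstep : t n ≤ t (n + 1) := hmono n (Nat.lt_succ_self n)
      have htn : t n ≤ b := le_trans hstep hn
      have h0n : t 0 ≤ t n := mono t n hmono'
      rw [Finset.sum_range_succ, ih t hmono' h0 htn]
      exact hstraight _ _ _ (hc (t 0) (t n) (t (n + 1)) h0 h0n hstep hn)
  have keymain : ∀ n : ℕ, 1 ≤ n → ∀ t : ℕ → ℝ, t 0 = a → t n = b → (∀ i < n, t i ≤ t (i + 1)) →
      ∑ i ∈ Finset.range n, d (c (t i)) (c (t (i + 1))) = d (c a) (c b) := by
    intro n _ t h0 hn hmono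
    rw [key n t hmono (h0 ▸ le_refl a) (hn ▸ le_refl b), h0, hn]
  refine ⟨keymain, ?_⟩
  have hset : {x : ℝ | ∃ n : ℕ, 1 ≤ n ∧ ∃ t : ℕ → ℝ, t 0 = a ∧ t n = b ∧
      (∀ i < n, t i ≤ t (i + 1)) ∧
      x = ∑ i ∈ Finset.range n, d (c (t i)) (c (t (i + 1)))} = {d (c a) (c b)} := by
    ext x
    simp only [Set.mem_setOf_eq, Set.mem_singleton_iff]
    constructor
    · rintro ⟨n, hn, t, h0, hb, hmono, rfl⟩
      exact keymain n hn t h0 hb hmono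
    · rintro rfl
      refine ⟨1, le_refl 1, fun i => if i = 0 then a else b, by simp, by simp, ?_, ?_⟩
      · intro i hi
        interval_cases i
        simp [hab]
      · simp
  rw [hset, csSup_singleton]
end
end

section
/- Let d be a straight pseudo-distance on ℍ, let γ ∈ SL(2,ℝ) (Matrix.SpecialLinearGroup (Fin 2) ℝ) act on ℍ by Möbius transformations (Mathlib's action), and assume d is γ-invariant: d (γ • x) (γ • y) = d x y for all x, y ∈ ℍ. Let p ∈ ℍ satisfy dist p ((γ^n) • p) = n · dist p (γ • p) for all n : ℕ (this says p lies on the translation axis of the hyperbolic element γ). Then for every q ∈ ℍ one has d q (γ • q) ≥ d p (γ • p). -/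
open scoped UpperHalfPlane

noncomputable section

theorem axis_point_minimizes_displacement
    (d : ℍ → ℍ → ℝ)
    (hpos : ∀ x y : ℍ, 0 ≤ d x y)
    (hrefl : ∀ x : ℍ, d x x = 0)
    (hsymm : ∀ x y : ℍ, d x y = d y x)
    (htri : ∀ x y z : ℍ, d x z ≤ d x y + d y z)
    (hstraight : ∀ x y z : ℍ, dist x y + dist y z = dist x z → d x y + d y z = d x z)
    (γ : Matrix.SpecialLinearGroup (Fin 2) ℝ)
    (hinv : ∀ x y : ℍ, d (γ • x) (γ • y) = d x y)
    (p : ℍ) (hp : ∀ n : ℕ, dist p ((γ ^ n) • p) = n * dist p (γ • p))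
    (q : ℍ) :
    d q (γ • q) ≥ d p (γ • p) := by
  -- d is invariant under powers of γ
  have hinvpow : ∀ (n : ℕ) (x y : ℍ), d ((γ ^ n) • x) ((γ ^ n) • y) = d x y := by
    intro n
    induction n with
    | zero => intro x y; simp
    | succ k ih =>
      intro x y
      have : (γ ^ (k + 1) : Matrix.SpecialLinearGroup (Fin 2) ℝ) = γ ^ k * γ := pow_succ γ k
      rw [this]
      rw [mul_smul, mul_smul, ih (γ • x) (γ • y), hinv]
  -- d p (γ^n • p) = n * d p (γ • p)
  have hdp : ∀ n : ℕ, d p ((γ ^ n) • p) = n * d p (γ • p) := by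
    intro n
    induction n with
    | zero => simp [hrefl]
    | succ k ih =>
      have hdistmid : dist p ((γ ^ k) • p) + dist ((γ ^ k) • p) ((γ ^ (k + 1)) • p)
          = dist p ((γ ^ (k + 1)) • p) := by
        have h1 : dist ((γ ^ k) • p) ((γ ^ (k + 1)) • p) = dist p (γ • p) := by
          rw [pow_succ, mul_smul]
          exact dist_smul _ _ _
        rw [hp k, h1, hp (k + 1)]
        push_cast
        ring
      have := hstraight p ((γ ^ k) • p) ((γ ^ (k + 1)) • p) hdistmid
      have h2 : d ((γ ^ k) • p) ((γ ^ (k + 1)) • p) = d p (γ • p) := by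
        rw [pow_succ, mul_smul]
        exact hinvpow k p (γ • p)
      rw [ih, h2] at this
      rw [← this]
      push_cast
      ring
  -- d q (γ^n • q) ≤ n * d q (γ • q)
  have hdq : ∀ n : ℕ, d q ((γ ^ n) • q) ≤ n * d q (γ • q) := by
    intro n
    induction n with
    | zero => simp [hrefl]
    | succ k ih =>
      calc d q ((γ ^ (k + 1)) • q) ≤ d q ((γ ^ k) • q) + d ((γ ^ k) • q) ((γ ^ (k + 1)) • q) :=
            htri _ _ _
        _ ≤ k * d q (γ • q) + d q (γ • q) := by
            have h2 : d ((γ ^ k) • q) ((γ ^ (k + 1)) • q) = d q (γ • q) := by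
              rw [pow_succ, mul_smul]; exact hinvpow k q (γ • q)
            rw [h2]; linarith
        _ = (k + 1 : ℕ) * d q (γ • q) := by push_cast; ring
  -- main estimate: n * d p (γ p) ≤ 2 * d p q + n * d q (γ q)
  have key : ∀ n : ℕ, (n : ℝ) * d p (γ • p) ≤ 2 * d p q + n * d q (γ • q) := by
    intro n
    have h1 : d p ((γ ^ n) • p) ≤ d p q + d q ((γ ^ n) • q) + d ((γ ^ n) • q) ((γ ^ n) • p) := by
      calc d p ((γ ^ n) • p) ≤ d p ((γ ^ n) • q) + d ((γ ^ n) • q) ((γ ^ n) • p) := htri _ _ _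
        _ ≤ (d p q + d q ((γ ^ n) • q)) + d ((γ ^ n) • q) ((γ ^ n) • p) := by
            have := htri p q ((γ ^ n) • q); linarith
    rw [hdp n, hinvpow n q p, hsymm q p] at h1
    have := hdq n
    linarith
  -- conclude
  by_contra h
  push_neg at h
  have hε : 0 < d p (γ • p) - d q (γ • q) := by linarith
  obtain ⟨n, hn⟩ := exists_nat_gt (2 * d p q / (d p (γ • p) - d q (γ • q)))
  have h2 : (n : ℝ) * (d p (γ • p) - d q (γ • q)) ≤ 2 * d p q := by
    have := key n; linarith
  have h3 : 2 * d p q / (d p (γ • p) - d q (γ • q)) < n := hn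
  have h4 : 2 * d p q < n * (d p (γ • p) - d q (γ • q)) := by
    rw [div_lt_iff₀ hε] at h3; linarith
  linarith
end
end

section
/- Let d be a straight pseudo-distance on ℍ, let γ ∈ SL(2,ℝ) (Matrix.SpecialLinearGroup (Fin 2) ℝ) act on ℍ by Möbius transformations, assume d (γ • x) (γ • y) = d x y for all x, y ∈ ℍ, and let p ∈ ℍ satisfy dist p ((γ^n) • p) = n · dist p (γ • p) for all n : ℕ. Then for every continuous map c : ℝ → ℍ and reals a ≤ b with c b = γ • (c a), and for every partition a = t₀ ≤ t₁ ≤ … ≤ tₙ = b, one has Σ_{i<n} d (c tᵢ) (c tᵢ₊₁) ≥ d p (γ • p); in particular the d-length of c over [a,b] is at least d p (γ • p). -/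
/-! For every `x`, invariance of `d` and the triangle inequality give
`N * d p (γ • p) = d p (γ ^ N • p) ≤ d p x + N * d x (γ • x) + d x p`, where the equality holds
because the points `γ ^ k • p` lie in this order on a hyperbolic geodesic, along which the
straight pseudo-distance `d` is additive. Letting `N → ∞` shows that `p` minimises the
displacement `x ↦ d x (γ • x)`, and a partition sum along a path from `c a` to `γ • c a`
is at least the displacement of `c a`. -/

open scoped UpperHalfPlane

theorem le_of_forall_nat_mul_le_mul_add {a b C : ℝ} (h : ∀ N : ℕ, N * a ≤ N * b + C) :
    a ≤ b := by
  by_contra! hlt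
  obtain ⟨N, hN⟩ := exists_nat_gt (C / (a - b))
  rw [div_lt_iff₀ (sub_pos.mpr hlt)] at hN
  linarith [h N]

theorem le_sum_range_of_triangle {X : Type*} {d : X → X → ℝ} (hrefl : ∀ x, d x x = 0)
    (htri : ∀ x y z, d x z ≤ d x y + d y z) (u : ℕ → X) (n : ℕ) :
    d (u 0) (u n) ≤ ∑ i ∈ Finset.range n, d (u i) (u (i + 1)) := by
  induction n with
  | zero => simp [hrefl]
  | succ k ih =>
    rw [Finset.sum_range_succ]
    linarith [htri (u 0) (u k) (u (k + 1))]

section Displacement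

variable {G X : Type*} [Monoid G] [MulAction G X] {d : X → X → ℝ} {g : G}

theorem pow_smul_invariant (hinv : ∀ x y, d (g • x) (g • y) = d x y) (n : ℕ) (x y : X) :
    d ((g ^ n) • x) ((g ^ n) • y) = d x y := by
  induction n generalizing x y with
  | zero => simp
  | succ k ih => rw [pow_succ, mul_smul, mul_smul, ih, hinv]

theorem displacement_pow_le (hrefl : ∀ x, d x x = 0) (htri : ∀ x y z, d x z ≤ d x y + d y z)
    (hinv : ∀ x y, d (g • x) (g • y) = d x y) (x : X) (n : ℕ) :
    d x ((g ^ n) • x) ≤ n * d x (g • x) := by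
  induction n with
  | zero => simp [hrefl]
  | succ k ih =>
    have hstep : d ((g ^ k) • x) ((g ^ (k + 1)) • x) = d x (g • x) := by
      rw [pow_succ, mul_smul, pow_smul_invariant hinv]
    push_cast
    linarith [htri x ((g ^ k) • x) ((g ^ (k + 1)) • x)]

theorem displacement_pow_eq_of_straight [PseudoMetricSpace X] [IsIsometricSMul G X]
    (hrefl : ∀ x, d x x = 0)
    (hstraight : ∀ x y z, dist x y + dist y z = dist x z → d x y + d y z = d x z)
    (hinv : ∀ x y, d (g • x) (g • y) = d x y) {p : X}
    (hp : ∀ n : ℕ, dist p ((g ^ n) • p) = n * dist p (g • p)) (n : ℕ) :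
    d p ((g ^ n) • p) = n * d p (g • p) := by
  induction n with
  | zero => simp [hrefl]
  | succ k ih =>
    have hsucc : (g ^ (k + 1)) • p = (g ^ k) • (g • p) := by rw [pow_succ, mul_smul]
    have hcollinear : dist p ((g ^ k) • p) + dist ((g ^ k) • p) ((g ^ (k + 1)) • p)
        = dist p ((g ^ (k + 1)) • p) := by
      rw [hsucc, dist_smul, hp k, ← hsucc, hp (k + 1)]
      push_cast
      ring
    rw [← hstraight _ _ _ hcollinear, ih, hsucc, pow_smul_invariant hinv]
    push_cast
    ring

theorem displacement_le_of_linear_growth (hrefl : ∀ x, d x x = 0)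
    (htri : ∀ x y z, d x z ≤ d x y + d y z) (hinv : ∀ x y, d (g • x) (g • y) = d x y) {p : X}
    (hp : ∀ n : ℕ, d p ((g ^ n) • p) = n * d p (g • p)) (x : X) :
    d p (g • p) ≤ d x (g • x) := by
  refine le_of_forall_nat_mul_le_mul_add (C := d p x + d x p) fun N => ?_
  calc (N : ℝ) * d p (g • p) = d p ((g ^ N) • p) := (hp N).symm
    _ ≤ d p x + (d x ((g ^ N) • x) + d ((g ^ N) • x) ((g ^ N) • p)) :=
      (htri _ x _).trans (add_le_add_right (htri _ _ _) _)
    _ ≤ N * d x (g • x) + (d p x + d x p) := by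
      rw [pow_smul_invariant hinv]
      linarith [displacement_pow_le hrefl htri hinv x N]

end Displacement

theorem partition_sum_ge_displacement_on_axis_general
    (d : ℍ → ℍ → ℝ)
    (hrefl : ∀ x : ℍ, d x x = 0)
    (htri : ∀ x y z : ℍ, d x z ≤ d x y + d y z)
    (hstraight : ∀ x y z : ℍ, dist x y + dist y z = dist x z → d x y + d y z = d x z)
    (γ : Matrix.SpecialLinearGroup (Fin 2) ℝ)
    (hinv : ∀ x y : ℍ, d (γ • x) (γ • y) = d x y)
    (p : ℍ) (hp : ∀ n : ℕ, dist p ((γ ^ n) • p) = n * dist p (γ • p))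
    (c : ℝ → ℍ) (a b : ℝ)
    (hclosed : c b = γ • (c a))
    (n : ℕ) (t : ℕ → ℝ) (ht0 : t 0 = a) (htn : t n = b) :
    ∑ i ∈ Finset.range n, d (c (t i)) (c (t (i + 1))) ≥ d p (γ • p) := by
  have hchain := le_sum_range_of_triangle hrefl htri (c ∘ t) n
  simp only [Function.comp_apply, ht0, htn, hclosed] at hchain
  exact (displacement_le_of_linear_growth hrefl htri hinv
    (displacement_pow_eq_of_straight hrefl hstraight hinv hp) (c a)).trans hchain

theorem partition_sum_ge_displacement_on_axis
    (d : ℍ → ℍ → ℝ)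
    (hpos : ∀ x y : ℍ, 0 ≤ d x y)
    (hrefl : ∀ x : ℍ, d x x = 0)
    (hsymm : ∀ x y : ℍ, d x y = d y x)
    (htri : ∀ x y z : ℍ, d x z ≤ d x y + d y z)
    (hstraight : ∀ x y z : ℍ, dist x y + dist y z = dist x z → d x y + d y z = d x z)
    (γ : Matrix.SpecialLinearGroup (Fin 2) ℝ)
    (hinv : ∀ x y : ℍ, d (γ • x) (γ • y) = d x y)
    (p : ℍ) (hp : ∀ n : ℕ, dist p ((γ ^ n) • p) = n * dist p (γ • p))
    (c : ℝ → ℍ) (hcont : Continuous c) (a b : ℝ) (hab : a ≤ b)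
    (hclosed : c b = γ • (c a))
    (n : ℕ) (t : ℕ → ℝ) (ht0 : t 0 = a) (htn : t n = b)
    (hmono : ∀ i < n, t i ≤ t (i + 1)) :
    ∑ i ∈ Finset.range n, d (c (t i)) (c (t (i + 1))) ≥ d p (γ • p) :=
  partition_sum_ge_displacement_on_axis_general d hrefl htri hstraight γ hinv p hp c a b hclosed n t
    ht0 htn
end

section
/- Let K := RatFunc ℝ with indeterminate x := RatFunc.X, let εp, εq, εr be arbitrary real numbers (regarded in K via the constant embedding C), and define B ∈ Matrix (Fin 3) (Fin 3) K by B := !![1, −x⁻¹·C εp, −C εq; −x·C εp, 1, −C εr; −C εq, −C εr, 1], and rᵢ := −1 + 2 • (B · Matrix.stdBasisMatrix i i 1) for i = 0, 1, 2. Then trace (r₁·r₀·r₁·r₂) = C (8·εp·εq·εr) · (x + x⁻¹) + C (16·εp²·εr² + 4·εq² − 1). -/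
/-! Every `-1 + 2 • (B * single i i 1)` agrees with `-1` outside its `i`-th column, and when
`B i i = 1` that column is `eᵢ + 2 ∑_{j ≠ i} B j i • eⱼ`. For a `3 × 3` matrix `B` with unit diagonal,
multiplying out the four explicit matrices expresses the trace of `r₁ r₀ r₁ r₂` through the cyclic
products `B₀₁B₁₀B₁₂B₂₁`, `B₁₀B₀₂B₂₁`, `B₀₁B₁₂B₂₀` and `B₀₂B₂₀` of off-diagonal entries alone;
substituting the entries of `B(X)` gives the claim. -/

noncomputable section

open RatFunc

/-- The bilinear form matrix B(X) of Example 1.14. -/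
def goldmanB (εp εq εr : ℝ) : Matrix (Fin 3) (Fin 3) (RatFunc ℝ) :=
  !![1, -(RatFunc.X)⁻¹ * RatFunc.C εp, -RatFunc.C εq;
     -RatFunc.X * RatFunc.C εp, 1, -RatFunc.C εr;
     -RatFunc.C εq, -RatFunc.C εr, 1]

/-- The reflections ρ(rᵢ) := −Id + 2 B(X) eᵢ ᵗeᵢ of Example 1.14. -/
def goldmanRefl (εp εq εr : ℝ) (i : Fin 3) : Matrix (Fin 3) (Fin 3) (RatFunc ℝ) :=
  -1 + 2 • (goldmanB εp εq εr * Matrix.single i i 1)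

namespace Matrix

variable {n R : Type*} [Fintype n] [DecidableEq n] [CommRing R]

def basisReflection (B : Matrix n n R) (i : n) : Matrix n n R :=
  -1 + 2 • (B * single i i 1)

theorem basisReflection_apply (B : Matrix n n R) (i j k : n) :
    basisReflection B i j k = (if k = i then 2 * B j i else 0) - (1 : Matrix n n R) j k := by
  rw [basisReflection, add_apply, neg_apply, smul_apply, nsmul_eq_mul, Nat.cast_ofNat,
    neg_add_eq_sub]
  split_ifs with hk
  · rw [hk, mul_single_apply_same, mul_one]
  · rw [mul_single_apply_of_ne (hbj := hk), mul_zero]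

variable (B : Matrix (Fin 3) (Fin 3) R)

theorem basisReflection_fin_three_zero (h : B 0 0 = 1) :
    basisReflection B 0 = !![1, 0, 0; 2 * B 1 0, -1, 0; 2 * B 2 0, 0, -1] := by
  ext j k
  fin_cases j <;> fin_cases k <;>
    simp [basisReflection_apply, h, sub_eq_iff_eq_add, one_add_one_eq_two]

theorem basisReflection_fin_three_one (h : B 1 1 = 1) :
    basisReflection B 1 = !![-1, 2 * B 0 1, 0; 0, 1, 0; 0, 2 * B 2 1, -1] := by
  ext j k
  fin_cases j <;> fin_cases k <;>
    simp [basisReflection_apply, h, sub_eq_iff_eq_add, one_add_one_eq_two]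

theorem basisReflection_fin_three_two (h : B 2 2 = 1) :
    basisReflection B 2 = !![-1, 0, 2 * B 0 2; 0, -1, 2 * B 1 2; 0, 0, 1] := by
  ext j k
  fin_cases j <;> fin_cases k <;>
    simp [basisReflection_apply, h, sub_eq_iff_eq_add, one_add_one_eq_two]

theorem trace_basisReflection_fin_three (h₀ : B 0 0 = 1) (h₁ : B 1 1 = 1) (h₂ : B 2 2 = 1) :
    trace (basisReflection B 1 * basisReflection B 0 * basisReflection B 1 *
        basisReflection B 2) =
      16 * B 0 1 * B 1 0 * B 1 2 * B 2 1 - 8 * (B 1 0 * B 0 2 * B 2 1 + B 0 1 * B 1 2 * B 2 0) +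
        4 * B 0 2 * B 2 0 - 1 := by
  rw [basisReflection_fin_three_zero B h₀, basisReflection_fin_three_one B h₁,
    basisReflection_fin_three_two B h₂, mul_fin_three, mul_fin_three, mul_fin_three,
    trace_fin_three_of]
  ring

end Matrix

theorem goldman_trace (εp εq εr : ℝ) :
    Matrix.trace
        (goldmanRefl εp εq εr 1 * goldmanRefl εp εq εr 0 *
          goldmanRefl εp εq εr 1 * goldmanRefl εp εq εr 2) =
      RatFunc.C (8 * εp * εq * εr) * (RatFunc.X + (RatFunc.X)⁻¹) +
        RatFunc.C (16 * εp ^ 2 * εr ^ 2 + 4 * εq ^ 2 - 1) := by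
  have hX : (RatFunc.X : RatFunc ℝ) ≠ 0 := RatFunc.X_ne_zero
  rw [show goldmanRefl εp εq εr = (goldmanB εp εq εr).basisReflection from rfl,
    Matrix.trace_basisReflection_fin_three _ rfl rfl rfl]
  simp only [goldmanB, Matrix.of_apply, Matrix.cons_val', Matrix.cons_val_zero,
    Matrix.cons_val_one, Matrix.cons_val, Matrix.cons_val_fin_one, map_mul, map_add, map_sub,
    map_pow, map_ofNat, map_one]
  field_simp
  ring
end
end

section
/- Let f be a nonzero element of RatFunc ℝ. Then the function t ↦ Real.log |f.eval (RingHom.id ℝ) t| / Real.log t tends, as t → +∞ (filter atTop on ℝ), to the integer degree f.intDegree (the degree of the numerator minus the degree of the denominator), viewed as a real number. -/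
/- STATEMENT 16: For a nonzero f ∈ RatFunc ℝ, the function
t ↦ log |f(t)| / log t tends, as t → +∞, to the integer degree of f (degree of the
numerator minus degree of the denominator), viewed as a real number. -/

open Filter

open Polynomial Asymptotics

lemma aux_log_eval_poly (p : Polynomial ℝ) (hp : p ≠ 0) :
    Tendsto (fun t : ℝ => Real.log |p.eval t| / Real.log t) atTop (nhds (p.natDegree : ℝ)) := by
  have hc : p.leadingCoeff ≠ 0 := leadingCoeff_ne_zero.2 hp
  have hv : ∀ᶠ t : ℝ in atTop, p.leadingCoeff * t ^ p.natDegree ≠ 0 := by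
    filter_upwards [eventually_gt_atTop (0:ℝ)] with t ht
    exact mul_ne_zero hc (pow_ne_zero _ ht.ne')
  have h1 : Tendsto (fun t => p.eval t / (p.leadingCoeff * t ^ p.natDegree)) atTop (nhds 1) := by
    have := (isEquivalent_iff_tendsto_one hv).1 (p.isEquivalent_atTop_lead)
    simpa [Pi.div_def] using this
  have hr : ∀ᶠ t : ℝ in atTop, p.eval t / (p.leadingCoeff * t ^ p.natDegree) ≠ 0 :=
    h1.eventually_ne one_ne_zero
  have key : ∀ᶠ t : ℝ in atTop,
      Real.log |p.eval t| / Real.log t =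
        Real.log |p.eval t / (p.leadingCoeff * t ^ p.natDegree)| / Real.log t
          + Real.log |p.leadingCoeff| / Real.log t + (p.natDegree : ℝ) := by
    filter_upwards [eventually_gt_atTop (1:ℝ), hr, hv] with t ht hrt hvt
    have ht0 : (0:ℝ) < t := lt_trans one_pos ht
    have hlt : Real.log t ≠ 0 := ne_of_gt (Real.log_pos ht)
    have heq : p.eval t = (p.eval t / (p.leadingCoeff * t ^ p.natDegree)) *
        (p.leadingCoeff * t ^ p.natDegree) := by field_simp
    rw [heq, abs_mul, abs_mul, Real.log_mul (abs_ne_zero.2 hrt)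
        (by positivity), Real.log_mul (abs_ne_zero.2 hc) (by positivity),
        abs_pow, abs_of_pos ht0, Real.log_pow]
    field_simp
    ring
  rw [Filter.tendsto_congr' key]
  have l1 : Tendsto (fun t : ℝ => Real.log |p.eval t / (p.leadingCoeff * t ^ p.natDegree)| / Real.log t)
      atTop (nhds 0) := by
    have : Tendsto (fun t : ℝ => Real.log |p.eval t / (p.leadingCoeff * t ^ p.natDegree)|)
        atTop (nhds 0) := by
      have habs := h1.abs
      rw [abs_one] at habs
      have := (Real.continuousAt_log one_ne_zero).tendsto.comp habs
      simpa only [Function.comp_def, Real.log_one] using this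
    exact this.div_atTop Real.tendsto_log_atTop
  have l2 : Tendsto (fun t : ℝ => Real.log |p.leadingCoeff| / Real.log t) atTop (nhds 0) :=
    tendsto_const_nhds.div_atTop Real.tendsto_log_atTop
  have := (l1.add l2).add (tendsto_const_nhds (x := (p.natDegree : ℝ)))
  simpa using this

theorem log_eval_div_log_tendsto_intDegree (f : RatFunc ℝ) (hf : f ≠ 0) :
    Tendsto (fun t : ℝ => Real.log |RatFunc.eval (RingHom.id ℝ) t f| / Real.log t)
      atTop (nhds (f.intDegree : ℝ)) := by
  have hnum : f.num ≠ 0 := RatFunc.num_ne_zero hf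
  have hden : f.denom ≠ 0 := f.denom_ne_zero
  have key : ∀ᶠ t : ℝ in atTop,
      Real.log |RatFunc.eval (RingHom.id ℝ) t f| / Real.log t =
        Real.log |f.num.eval t| / Real.log t - Real.log |f.denom.eval t| / Real.log t := by
    filter_upwards [Polynomial.eventually_no_roots f.num hnum,
      Polynomial.eventually_no_roots f.denom hden] with t h1 h2
    have h1' : f.num.eval t ≠ 0 := h1
    have h2' : f.denom.eval t ≠ 0 := h2
    rw [RatFunc.eval]
    show Real.log |f.num.eval t / f.denom.eval t| / Real.log t = _
    rw [abs_div, Real.log_div (abs_ne_zero.2 h1') (abs_ne_zero.2 h2'), sub_div]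
  rw [Filter.tendsto_congr' key]
  have := (aux_log_eval_poly f.num hnum).sub (aux_log_eval_poly f.denom hden)
  have hdeg : (f.intDegree : ℝ) = (f.num.natDegree : ℝ) - (f.denom.natDegree : ℝ) := by
    rw [RatFunc.intDegree]; push_cast; ring
  rw [hdeg]
  exact this
end
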